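/- arXiv:1711.08514 — 4 statements merged into one kernel-verified Lean document; each statement's English description precedes it below -/
import Mathlib

section
/- Let Φ be a finite set of Laurent polynomial 'polar parts' in variables x₁,…,x_ℓ, each nonzero element φ of which is 'purely monomial', i.e. of the form u_φ·x₁^{-m₁}⋯x_ℓ^{-m_ℓ} with (m₁,…,m_ℓ) ∈ ℕ^ℓ \ {0} and u_φ a unit. If Φ is good (every difference of two distinct elements is purely monomial) and 0 ∈ Φ, then the set of exponent vectors {m_φ : φ ∈ Φ \ {0}} is totally ordered with respect to the componentwise partial order on ℕ^ℓ. -/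
/- STATEMENT 0: For a good finite set Φ of polar parts (elements of the fraction field of
ℂ[[x₁,…,x_ℓ]], each nonzero one purely monomial, i.e. of the form u·x^{-m} with m ∈ ℕ^ℓ \ {0}
and u a unit of ℂ[[x]]) containing 0, the exponent vectors are totally ordered componentwise. -/

noncomputable section

abbrev PolarPS (ℓ : ℕ) := MvPowerSeries (Fin ℓ) ℂ

abbrev PolarK (ℓ : ℕ) := FractionRing (PolarPS ℓ)

/-- The monomial x^m in ℂ[[x₁,…,x_ℓ]]. -/
def Xmon {ℓ : ℕ} (m : Fin ℓ →₀ ℕ) : PolarPS ℓ := MvPowerSeries.monomial m (1 : ℂ)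

/-- φ is purely monomial with exponent vector m : φ = u / x^m with m ≠ 0 and u a unit. -/
def IsPurelyMonomialWith {ℓ : ℕ} (φ : PolarK ℓ) (m : Fin ℓ →₀ ℕ) : Prop :=
  m ≠ 0 ∧ ∃ u : PolarPS ℓ, IsUnit u ∧
    φ * algebraMap (PolarPS ℓ) (PolarK ℓ) (Xmon m) = algebraMap (PolarPS ℓ) (PolarK ℓ) u

def IsPurelyMonomial {ℓ : ℕ} (φ : PolarK ℓ) : Prop := ∃ m, IsPurelyMonomialWith φ m

/-
Multiplying φ, ψ and φ - ψ by x^N, N = m_φ + m_ψ + m_{φ-ψ}, gives power series u·x^{N-m_φ},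
v·x^{N-m_ψ} and w·x^{N-m_{φ-ψ}} with u, v, w units, the first minus the second being the third.
If m_φ and m_ψ were incomparable, the coefficients at N - m_φ and N - m_ψ would force
N - m_{φ-ψ} below both, and then the coefficient at N - m_{φ-ψ} vanishes on the left but not on
the right.
-/

namespace MvPowerSeries

variable {σ R : Type*}

section CommSemiring

variable [CommSemiring R]

theorem coeff_mul_monomial_one_self (p : MvPowerSeries σ R) (a : σ →₀ ℕ) :
    coeff a (p * monomial a 1) = constantCoeff p := by
  rw [coeff_mul_monomial, if_pos le_rfl, tsub_self, mul_one, coeff_zero_eq_constantCoeff_apply]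

theorem le_of_coeff_mul_monomial_one_ne_zero {p : MvPowerSeries σ R} {a b : σ →₀ ℕ}
    (h : coeff b (p * monomial a 1) ≠ 0) : a ≤ b := by
  rw [coeff_mul_monomial] at h
  by_contra hab
  exact h (if_neg hab)

theorem le_of_mul_monomial_one_eq {u v : MvPowerSeries σ R} {a b : σ →₀ ℕ}
    (hu : constantCoeff u ≠ 0) (h : u * monomial a 1 = v * monomial b 1) : b ≤ a :=
  le_of_coeff_mul_monomial_one_ne_zero (p := v) <| by
    rwa [← h, coeff_mul_monomial_one_self]

end CommSemiring

theorem le_or_le_of_mul_monomial_one_sub_eq [CommRing R] {u v w : MvPowerSeries σ R}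
    {a b c : σ →₀ ℕ} (hu : constantCoeff u ≠ 0) (hv : constantCoeff v ≠ 0)
    (hw : constantCoeff w ≠ 0)
    (h : u * monomial a 1 - v * monomial b 1 = w * monomial c 1) : a ≤ b ∨ b ≤ a := by
  by_contra! ⟨hab, hba⟩
  have coeff_left (d : σ →₀ ℕ) : coeff d (w * monomial c 1) =
      coeff d (u * monomial a 1) - coeff d (v * monomial b 1) := by
    rw [← h, map_sub]
  have hca : c ≤ a := le_of_coeff_mul_monomial_one_ne_zero (p := w) <| by
    rwa [coeff_left, coeff_mul_monomial_one_self, coeff_mul_monomial, if_neg hba, sub_zero]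
  have hcb : c ≤ b := le_of_coeff_mul_monomial_one_ne_zero (p := w) <| by
    rwa [coeff_left, coeff_mul_monomial_one_self, coeff_mul_monomial, if_neg hab, zero_sub,
      neg_ne_zero]
  have hac : ¬a ≤ c := fun hac => hab ((le_antisymm hac hca).trans_le hcb)
  have hbc : ¬b ≤ c := fun hbc => hba ((le_antisymm hbc hcb).trans_le hca)
  apply hw
  rw [← coeff_mul_monomial_one_self, coeff_left, coeff_mul_monomial, coeff_mul_monomial,
    if_neg hac, if_neg hbc, sub_zero]

end MvPowerSeries

theorem Xmon_add {ℓ : ℕ} (a b : Fin ℓ →₀ ℕ) : Xmon (a + b) = Xmon a * Xmon b := by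
  simp only [Xmon, MvPowerSeries.monomial_mul_monomial, mul_one]

theorem mul_algebraMap_Xmon_add_eq {ℓ : ℕ} {φ : PolarK ℓ} {m : Fin ℓ →₀ ℕ} {u : PolarPS ℓ}
    (h : φ * algebraMap (PolarPS ℓ) (PolarK ℓ) (Xmon m) = algebraMap (PolarPS ℓ) (PolarK ℓ) u)
    {N : Fin ℓ →₀ ℕ} (k : Fin ℓ →₀ ℕ) (hN : m + k = N) :
    φ * algebraMap (PolarPS ℓ) (PolarK ℓ) (Xmon N) =
      algebraMap (PolarPS ℓ) (PolarK ℓ) (u * Xmon k) := by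
  rw [← hN, Xmon_add, map_mul, map_mul, ← mul_assoc, h]

theorem stmt0_general {ℓ : ℕ} (Φ : Finset (PolarK ℓ))
    (hgood : ∀ φ ∈ Φ, ∀ ψ ∈ Φ, φ ≠ ψ → IsPurelyMonomial (φ - ψ))
    {φ ψ : PolarK ℓ} (hφ : φ ∈ Φ) (hψ : ψ ∈ Φ)
    {mφ mψ : Fin ℓ →₀ ℕ}
    (hmφ : IsPurelyMonomialWith φ mφ) (hmψ : IsPurelyMonomialWith ψ mψ) :
    mφ ≤ mψ ∨ mψ ≤ mφ := by
  have inj := IsFractionRing.injective (PolarPS ℓ) (PolarK ℓ)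
  obtain ⟨-, u, hu, hφu⟩ := hmφ
  obtain ⟨-, v, hv, hψv⟩ := hmψ
  have hu0 := (MvPowerSeries.isUnit_iff_constantCoeff.mp hu).ne_zero
  have hv0 := (MvPowerSeries.isUnit_iff_constantCoeff.mp hv).ne_zero
  rcases eq_or_ne φ ψ with rfl | hne
  · have h : u * Xmon mψ = v * Xmon mφ := inj <| by
      rw [← mul_algebraMap_Xmon_add_eq hφu mψ rfl,
        ← mul_algebraMap_Xmon_add_eq hψv mφ (add_comm _ _)]
    exact Or.inl (MvPowerSeries.le_of_mul_monomial_one_eq hu0 h)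
  obtain ⟨m, -, w, hw, hφψw⟩ := hgood φ hφ ψ hψ hne
  have hw0 := (MvPowerSeries.isUnit_iff_constantCoeff.mp hw).ne_zero
  have cleared : u * Xmon (mψ + m) - v * Xmon (mφ + m) = w * Xmon (mφ + mψ) := inj <| by
    rw [map_sub, ← mul_algebraMap_Xmon_add_eq hφu (N := mφ + mψ + m) _ (by abel),
      ← mul_algebraMap_Xmon_add_eq hψv (N := mφ + mψ + m) _ (by abel),
      ← mul_algebraMap_Xmon_add_eq hφψw (N := mφ + mψ + m) _ (by abel), sub_mul]
  simpa only [add_le_add_iff_right, or_comm] using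
    MvPowerSeries.le_or_le_of_mul_monomial_one_sub_eq hu0 hv0 hw0 cleared

theorem stmt0 {ℓ : ℕ} (Φ : Finset (PolarK ℓ)) (h0 : (0 : PolarK ℓ) ∈ Φ)
    (hgood : ∀ φ ∈ Φ, ∀ ψ ∈ Φ, φ ≠ ψ → IsPurelyMonomial (φ - ψ))
    {φ ψ : PolarK ℓ} (hφ : φ ∈ Φ) (hψ : ψ ∈ Φ) (hφ0 : φ ≠ 0) (hψ0 : ψ ≠ 0)
    {mφ mψ : Fin ℓ →₀ ℕ}
    (hmφ : IsPurelyMonomialWith φ mφ) (hmψ : IsPurelyMonomialWith ψ mψ) :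
    mφ ≤ mψ ∨ mψ ≤ mφ :=
  stmt0_general Φ hgood hφ hψ hmφ hmψ

end
end

section
/- Let F be a locally constant sheaf of sets on a topological space U, let V ⊂ U be a connected open subset with basepoint x₀ ∈ V such that the inclusion induces an isomorphism π₁(V, x₀) → π₁(U, x₀), and assume U is connected, locally path-connected and semi-locally simply connected. Then every section of F on V extends uniquely to a section of F on U. -/
/-! Composing the section over `V` with `p` recovers the inclusion `V ↪ X`, so every loop of `V`
at `x₀` is the image of a loop of `E`; as `π₁(V, x₀) → π₁(X, x₀)` is onto, the lifting criterion
lifts `id : X → X` through `p` to a section `S` with `S x₀ = s x₀`. Lifts of a map from a connected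
space agreeing at one point coincide, which gives both `S = s` on `V` and uniqueness of `S`. -/

open FundamentalGroup

theorem FundamentalGroup.range_map_le_range_mapOfEq_of_lift {B X E : Type*} [TopologicalSpace B]
    [TopologicalSpace X] [TopologicalSpace E] (p : C(E, X)) {i : C(B, X)} {s : C(B, E)}
    (hs : ∀ b, p (s b) = i b) (b₀ : B) :
    (map i b₀).range ≤ (mapOfEq p (hs b₀)).range := by
  rintro _ ⟨⟨δ⟩, rfl⟩
  refine ⟨map s b₀ (.mk δ), ?_⟩
  rw [mapOfEq_apply]
  change (((Path.Homotopic.Quotient.mk δ).map s).map p).cast _ _ =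
    (Path.Homotopic.Quotient.mk δ).map i
  simp only [← Path.Homotopic.Quotient.mk_map, ← Path.Homotopic.Quotient.mk_cast]
  congr 1
  ext t
  exact hs (δ t)

theorem IsCoveringMap.existsUnique_section_extending_of_surjective_map {B X E : Type*}
    [TopologicalSpace B] [TopologicalSpace X] [TopologicalSpace E] [PreconnectedSpace B]
    [PathConnectedSpace X] [LocallyPathConnectedSpace X] {p : E → X} (hp : IsCoveringMap p)
    {i : C(B, X)} {s : C(B, E)} (hs : ∀ b, p (s b) = i b) (b₀ : B)
    (hi : Function.Surjective (map i b₀)) :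
    ∃! S : X → E, Continuous S ∧ (∀ x, p (S x) = x) ∧ ∀ b, S (i b) = s b := by
  have hrange : (map (.id X) (i b₀)).range ≤ (mapOfEq ⟨p, hp.continuous⟩ (hs b₀)).range :=
    fun γ _ ↦ (hi γ).elim fun q hq ↦
      range_map_le_range_mapOfEq_of_lift ⟨p, hp.continuous⟩ hs b₀ ⟨q, hq⟩
  obtain ⟨S, ⟨hSb₀, hpS⟩, -⟩ := hp.existsUnique_continuousMap_lifts_of_range_le _ hrange
  have hSsec (x : X) : p (S x) = x := congr_fun hpS x
  have hSi : ∀ b, S (i b) = s b := congr_fun <|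
    hp.eq_of_comp_eq (S.continuous.comp i.continuous) s.continuous
      (funext fun b ↦ by simp [hSsec, hs]) b₀ hSb₀
  refine ⟨S, ⟨S.continuous, hSsec, hSi⟩, fun S' ⟨hS'c, hpS', hS'i⟩ ↦ ?_⟩
  exact hp.eq_of_comp_eq hS'c S.continuous (funext fun x ↦ by simp [hpS', hSsec])
    (i b₀) (by rw [hS'i, hSi])

theorem stmt5_general {X E : Type*} [TopologicalSpace X] [TopologicalSpace E]
    [ConnectedSpace X] [LocallyPathConnectedSpace X]
    {p : E → X} (hp : IsCoveringMap p)
    (V : Set X) (hVconn : IsConnected V) (x₀ : X) (hx₀ : x₀ ∈ V)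
    -- the inclusion V ↪ X induces an isomorphism on fundamental groups at x₀:
    (hiso : Function.Bijective
      (fun q : Path.Homotopic.Quotient (⟨x₀, hx₀⟩ : V) (⟨x₀, hx₀⟩ : V) =>
        Path.Homotopic.Quotient.map q ⟨(Subtype.val : V → X), continuous_subtype_val⟩))
    -- a continuous section of the covering over V:
    (s : V → E) (hs : Continuous s) (hps : ∀ v : V, p (s v) = (v : X)) :
    -- it extends uniquely to a continuous section over all of X:
    ∃! S : X → E, Continuous S ∧ (∀ x, p (S x) = x) ∧ ∀ v : V, S (v : X) = s v := by
  have : PathConnectedSpace X := pathConnectedSpace_iff_connectedSpace.mpr ‹_›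
  have : PreconnectedSpace V := Subtype.preconnectedSpace hVconn.isPreconnected
  exact hp.existsUnique_section_extending_of_surjective_map (s := ⟨s, hs⟩) hps ⟨x₀, hx₀⟩ hiso.2

theorem stmt5 {X E : Type*} [TopologicalSpace X] [TopologicalSpace E]
    [ConnectedSpace X] [LocallyPathConnectedSpace X]
    -- semi-local simple connectedness of X:
    (hslsc : ∀ x : X, ∃ U : Set X, IsOpen U ∧ x ∈ U ∧
      ∀ γ : Path x x, (∀ τ : unitInterval, γ τ ∈ U) →
        (⟦γ⟧ : Path.Homotopic.Quotient x x) = ⟦Path.refl x⟧)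
    {p : E → X} (hp : IsCoveringMap p)
    (V : Set X) (hV : IsOpen V) (hVconn : IsConnected V) (x₀ : X) (hx₀ : x₀ ∈ V)
    -- the inclusion V ↪ X induces an isomorphism on fundamental groups at x₀:
    (hiso : Function.Bijective
      (fun q : Path.Homotopic.Quotient (⟨x₀, hx₀⟩ : V) (⟨x₀, hx₀⟩ : V) =>
        Path.Homotopic.Quotient.map q ⟨(Subtype.val : V → X), continuous_subtype_val⟩))
    -- a continuous section of the covering over V:
    (s : V → E) (hs : Continuous s) (hps : ∀ v : V, p (s v) = (v : X)) :
    -- it extends uniquely to a continuous section over all of X: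
    ∃! S : X → E, Continuous S ∧ (∀ x, p (S x) = x) ∧ ∀ v : V, S (v : X) = s v :=
  stmt5_general hp V hVconn x₀ hx₀ hiso s hs hps
end

section
/- Let Λ₀ be a diagonal complex n×n matrix and A₁ a complex n×n matrix. Suppose (a) (A₁)_{ij} = 0 whenever (Λ₀)_{ii} = (Λ₀)_{jj} and i ≠ j is in the same coalescence block (i.e. A₁^{nd} ∈ im ad(Λ₀)), and (b) for all i, j with (Λ₀)_{ii} = (Λ₀)_{jj}, the difference (A₁)_{ii} − (A₁)_{jj} is not a nonzero integer. Then there exists a formal power series F(z) = I + z P₁ + z² P₂ + ⋯ with matrix coefficients such that the formal gauge transformation by F takes the connection matrix (Λ₀/z + A₁) dz/z to the diagonal matrix (Λ₀/z + A₁^{diag}) dz/z, where A₁^{diag} is the diagonal part of A₁. The gauge transformation relation is: z²(dF/dz) = (Λ₀ + z A₁) F − F (Λ₀ + z A₁^{diag}). -/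
/-!
Write `defect A k P = k P - A P + P A^diag`, so that the order-`k` equation is
`[Λ₀, P_{k+1}] = defect A k P_k`, whose `(i, j)` entry is
`(d_i - d_j) (P_{k+1})_{ij} = (defect A k P_k)_{ij}`. Off the blocks `d_i ≠ d_j` this
determines `P_{k+1}`. On the blocks it is a constraint on `P_k`, which by (a) reads
`(k - a_ii + a_jj) (P_k)_{ij} = ∑_{d_l ≠ d_i} a_il (P_k)_{lj}`: its right side involves only
off-block entries, already fixed, and by (b) it can be solved for the block entries when `k ≥ 1`.
-/

open Matrix

namespace FormalDiagonalization

variable {ι K : Type*} [Fintype ι] [Field K] {d : ι → K} {A : Matrix ι ι K}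

def defect [DecidableEq ι] (A : Matrix ι ι K) (k : ℕ) (P : Matrix ι ι K) : Matrix ι ι K :=
  (k : K) • P - A * P + P * diagonal (fun i => A i i)

lemma defect_apply [DecidableEq ι] (A P : Matrix ι ι K) (k : ℕ) (i j : ι) :
    defect A k P i j = k * P i j - (A * P) i j + P i j * A j j := by
  simp [defect]

lemma diagonal_mul_sub_mul_diagonal_apply [DecidableEq ι] (d : ι → K) (Q : Matrix ι ι K)
    (i j : ι) : (diagonal d * Q - Q * diagonal d) i j = (d i - d j) * Q i j := by
  simp only [Matrix.sub_apply, diagonal_mul, mul_diagonal]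
  ring

lemma mul_apply_eq_add_sum_offBlock [DecidableEq K]
    (ha : ∀ i j, i ≠ j → d i = d j → A i j = 0) (P : Matrix ι ι K) (i j : ι) :
    (A * P) i j = A i i * P i j + ∑ l with d l ≠ d i, A i l * P l j := by
  rw [mul_apply, ← Finset.sum_filter_add_sum_filter_not _ (fun l => d l = d i),
    Finset.sum_eq_single_of_mem i (by simp)]
  intro l hl hli
  rw [ha i l (Ne.symm hli) (Finset.mem_filter.1 hl).2.symm, zero_mul]

lemma defect_apply_of_eq [DecidableEq ι] [DecidableEq K]
    (ha : ∀ i j, i ≠ j → d i = d j → A i j = 0) (k : ℕ) (P : Matrix ι ι K) (i j : ι) :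
    defect A k P i j = (k - A i i + A j j) * P i j - ∑ l with d l ≠ d i, A i l * P l j := by
  rw [defect_apply, mul_apply_eq_add_sum_offBlock ha]
  ring

lemma defect_zero_one_apply_of_eq [DecidableEq ι] (ha : ∀ i j, i ≠ j → d i = d j → A i j = 0)
    {i j : ι} (hij : d i = d j) : defect A 0 1 i j = 0 := by
  rcases eq_or_ne i j with rfl | hne
  · simp [defect_apply]
  · simp [defect_apply, one_apply_ne hne, ha i j hne hij]

variable [DecidableEq K]

variable (d A) in
def offBlockSolution [DecidableEq ι] (k : ℕ) (P : Matrix ι ι K) : Matrix ι ι K :=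
  of fun i j => if d i = d j then 0 else defect A k P i j / (d i - d j)

variable (d A) in
def fillBlocks (k : ℕ) (Q : Matrix ι ι K) : Matrix ι ι K :=
  of fun i j =>
    if d i = d j then (∑ l with d l ≠ d i, A i l * Q l j) / (k - A i i + A j j) else Q i j

lemma fillBlocks_apply_of_ne (k : ℕ) (Q : Matrix ι ι K) {i j : ι} (hij : d i ≠ d j) :
    fillBlocks d A k Q i j = Q i j := by
  simp [fillBlocks, hij]

lemma defect_fillBlocks_apply_of_eq [DecidableEq ι] (ha : ∀ i j, i ≠ j → d i = d j → A i j = 0)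
    (k : ℕ) (Q : Matrix ι ι K) {i j : ι} (hij : d i = d j) (hk : (k : K) - A i i + A j j ≠ 0) :
    defect A k (fillBlocks d A k Q) i j = 0 := by
  have hoff : ∀ l ∈ Finset.univ.filter (fun l => d l ≠ d i),
      A i l * fillBlocks d A k Q l j = A i l * Q l j := fun l hl => by
    rw [fillBlocks_apply_of_ne k Q (hij ▸ (Finset.mem_filter.1 hl).2)]
  rw [defect_apply_of_eq ha, Finset.sum_congr rfl hoff]
  simp only [fillBlocks, of_apply, hij, if_true]
  rw [mul_div_cancel₀ _ hk, sub_self]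

variable (d A) in
def gaugeCoeff [DecidableEq ι] : ℕ → Matrix ι ι K
  | 0 => 1
  | k + 1 => fillBlocks d A (k + 1) (offBlockSolution d A k (gaugeCoeff k))

lemma defect_gaugeCoeff_apply_of_eq [DecidableEq ι] (ha : ∀ i j, i ≠ j → d i = d j → A i j = 0)
    (hres : ∀ i j, d i = d j → ∀ k : ℕ, A i i - A j j ≠ k + 1) (k : ℕ) {i j : ι}
    (hij : d i = d j) : defect A k (gaugeCoeff d A k) i j = 0 := by
  cases k with
  | zero => exact defect_zero_one_apply_of_eq ha hij
  | succ k =>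
    refine defect_fillBlocks_apply_of_eq ha _ _ hij fun h => hres i j hij k ?_
    push_cast at h
    linear_combination -h

theorem diagonal_mul_gaugeCoeff_succ_sub [DecidableEq ι]
    (ha : ∀ i j, i ≠ j → d i = d j → A i j = 0)
    (hres : ∀ i j, d i = d j → ∀ k : ℕ, A i i - A j j ≠ k + 1) (k : ℕ) :
    diagonal d * gaugeCoeff d A (k + 1) - gaugeCoeff d A (k + 1) * diagonal d
      = defect A k (gaugeCoeff d A k) := by
  ext i j
  rw [diagonal_mul_sub_mul_diagonal_apply]
  by_cases hij : d i = d j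
  · rw [hij, sub_self, zero_mul, defect_gaugeCoeff_apply_of_eq ha hres k hij]
  · rw [gaugeCoeff, fillBlocks_apply_of_ne _ _ hij]
    simp only [offBlockSolution, of_apply, hij, if_false]
    exact mul_div_cancel₀ _ (sub_ne_zero.2 hij)

end FormalDiagonalization

open FormalDiagonalization in
theorem stmt9 {n : ℕ} (d : Fin n → ℂ) (A₁ : Matrix (Fin n) (Fin n) ℂ)
    (ha : ∀ i j, i ≠ j → d i = d j → A₁ i j = 0)
    (hb : ∀ i j, d i = d j → ∀ k : ℤ, k ≠ 0 → A₁ i i - A₁ j j ≠ (k : ℂ)) :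
    ∃ P : ℕ → Matrix (Fin n) (Fin n) ℂ, P 0 = 1 ∧
      ∀ k : ℕ, (k : ℂ) • P k =
        Matrix.diagonal d * P (k + 1) - P (k + 1) * Matrix.diagonal d
          + A₁ * P k - P k * Matrix.diagonal (fun i => A₁ i i) := by
  have hres : ∀ i j, d i = d j → ∀ k : ℕ, A₁ i i - A₁ j j ≠ k + 1 := fun i j hij k => by
    exact_mod_cast hb i j hij (k + 1) (by omega)
  refine ⟨gaugeCoeff d A₁, rfl, fun k => ?_⟩
  rw [diagonal_mul_gaugeCoeff_succ_sub ha hres, defect]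
  abel
end

section
/- Let R₁, R₂ be free modules with connection over the ring of formal Laurent series ℂ((z)) such that the connections are regular singular, i.e. in suitable bases ∇ = d + C_i(z) dz/z with C_i ∈ Matₙ(ℂ[[z]]), and let φ ∈ z^{-1}ℂ[z^{-1}] be a nonzero polar part. Then every horizontal morphism from R₁ to E^φ ⊗ R₂ is zero; equivalently, if a matrix F ∈ Matₙ(ℂ((z))) satisfies z (dF/dz) = C₂ F − F C₁ + z φ'(z) F with C₁, C₂ ∈ Matₙ(ℂ[[z]]) and φ a nonzero polar part (so z φ'(z) has a pole of order ≥ 1), then F = 0. -/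
/- STATEMENT 13: Hom^∇(R₁, E^φ ⊗ R₂) = 0 for regular singular R₁, R₂ over ℂ((z)) and a
nonzero polar part φ.  Matrix form, written coefficientwise on Laurent expansions:
a matrix Laurent series F = Σ_d F_d z^d (support bounded below) satisfying
z dF/dz = C₂ F − F C₁ + z φ'(z) F, with C₁, C₂ matrix power series and
φ = Σ_{k≥1} a_k z^{-k} a nonzero polar part (so z φ'(z) = Σ_{k≥1} (−k a_k) z^{-k}),
must vanish. -/

theorem stmt13 {n N : ℕ} (F : ℤ → Matrix (Fin n) (Fin n) ℂ)
    (hF : ∀ d : ℤ, d < -(N : ℤ) → F d = 0)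
    (C₁ C₂ : ℕ → Matrix (Fin n) (Fin n) ℂ)
    (a : ℕ →₀ ℂ) (ha0 : a 0 = 0) (ha : a ≠ 0)
    (heq : ∀ d : ℤ, (d : ℂ) • F d =
      (∑ᶠ j : ℕ, C₂ j * F (d - (j : ℤ))) - (∑ᶠ j : ℕ, F (d - (j : ℤ)) * C₁ j)
        + ∑ᶠ k : ℕ, (-(k : ℂ) * a k) • F (d + (k : ℤ))) :
    ∀ d : ℤ, F d = 0 := by
  by_contra hcon
  push_neg at hcon
  obtain ⟨d₁, hd₁⟩ := hcon
  -- least element of the support of F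
  have hbdd : ∀ d : ℤ, F d ≠ 0 → -(N : ℤ) ≤ d := by
    intro d hd
    by_contra h
    exact hd (hF d (by omega))
  obtain ⟨d₀, hd₀, hmin⟩ := Int.exists_least_of_bdd
    (P := fun d => F d ≠ 0) ⟨-(N : ℤ), fun z hz => hbdd z hz⟩ ⟨d₁, hd₁⟩
  have hlt : ∀ d : ℤ, d < d₀ → F d = 0 := by
    intro d hd
    by_contra h
    exact absurd (hmin d h) (by omega)
  -- top of the support of a
  have hane : a.support.Nonempty := Finsupp.support_nonempty_iff.mpr ha
  set k₀ := a.support.max' hane with hk₀def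
  have hak₀ : a k₀ ≠ 0 := Finsupp.mem_support_iff.mp (a.support.max'_mem hane)
  have hk₀pos : 0 < k₀ := by
    rcases Nat.eq_zero_or_pos k₀ with h | h
    · exact absurd (h ▸ hak₀) (by simp [ha0])
    · exact h
  have hle : ∀ k ∈ a.support, k ≤ k₀ := fun k hk => a.support.le_max' k hk
  have key := heq (d₀ - (k₀ : ℤ))
  have h1 : (∑ᶠ j : ℕ, C₂ j * F (d₀ - (k₀ : ℤ) - (j : ℤ))) = 0 := by
    apply finsum_eq_zero_of_forall_eq_zero
    intro j
    rw [hlt (d₀ - (k₀ : ℤ) - (j : ℤ)) (by omega)]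
    simp
  have h2 : (∑ᶠ j : ℕ, F (d₀ - (k₀ : ℤ) - (j : ℤ)) * C₁ j) = 0 := by
    apply finsum_eq_zero_of_forall_eq_zero
    intro j
    rw [hlt (d₀ - (k₀ : ℤ) - (j : ℤ)) (by omega)]
    simp
  have h3 : (∑ᶠ k : ℕ, (-(k : ℂ) * a k) • F (d₀ - (k₀ : ℤ) + (k : ℤ)))
      = (-(k₀ : ℂ) * a k₀) • F d₀ := by
    rw [finsum_eq_single _ k₀]
    · rw [show d₀ - (k₀ : ℤ) + (k₀ : ℤ) = d₀ by omega]
    · intro k hk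
      rcases le_or_gt k k₀ with h | h
      · have hk' : k < k₀ := lt_of_le_of_ne h hk
        rw [hlt (d₀ - (k₀ : ℤ) + (k : ℤ)) (by omega)]
        simp
      · have : a k = 0 := by
          by_contra hak
          exact absurd (hle k (Finsupp.mem_support_iff.mpr hak)) (by omega)
        simp [this]
  have hF0 : F (d₀ - (k₀ : ℤ)) = 0 := hlt _ (by omega)
  rw [h1, h2, h3, hF0] at key
  simp only [smul_zero, sub_zero, zero_add] at key
  have hc : (-(k₀ : ℂ) * a k₀) ≠ 0 := by
    apply mul_ne_zero _ hak₀
    simp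
    exact_mod_cast hk₀pos.ne'
  have : F d₀ = 0 := by
    have := key.symm
    rcases smul_eq_zero.mp this with h | h
    · exact absurd h hc
    · exact h
  exact hd₀ this
end
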